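/- arXiv:2504.18011 — 2 statements merged into one kernel-verified Lean document; each statement's English description precedes it below -/
import Mathlib

section
/- Let (X,G) be a dynamical system and H an almost normal subgroup of G. If the set X_H = {x ∈ X : G_x = gHg⁻¹ for some g ∈ G} is dense in X, then X_H is exactly the set of points of X with trivial holonomy, i.e., X_H = {x ∈ X : every g ∈ G_x fixes pointwise some open neighborhood of x}. -/
/-- The conjugate subgroup `g H g⁻¹`. -/
def conjSubgroup {G : Type*} [Group G] (g : G) (H : Subgroup G) : Subgroup G :=
  Subgroup.map (MulAut.conj g).toMonoidHom H

/-- The set `X_H` of points of `X` whose stabilizer is conjugate to `H`. -/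
def setXH (G : Type*) {X : Type*} [Group G] [MulAction G X] (H : Subgroup G) : Set X :=
  {x : X | ∃ g : G, MulAction.stabilizer G x = conjSubgroup g H}

/-- A point `x` has trivial holonomy if every element of its stabilizer fixes pointwise
some open neighborhood of `x`. -/
def TrivialHolonomy (G : Type*) {X : Type*} [Group G] [TopologicalSpace X] [MulAction G X]
    (x : X) : Prop :=
  ∀ g ∈ MulAction.stabilizer G x, ∃ U : Set X, IsOpen U ∧ x ∈ U ∧ ∀ y ∈ U, g • y = y

/-!
A point `x` of the closure of the stratum `{y | G_y = K}` has `K ≤ G_x`, since fixed-point sets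
are closed; if moreover `x` has trivial holonomy, an element of `G_x` fixes a neighbourhood of `x`,
which meets the stratum, so `G_x = K`. As `H` has only finitely many conjugates, density of `X_H`
puts every point in the closure of one of finitely many strata of conjugates of `H`. Near a point
`x ∈ X_H` every point lies in such a closure that also contains `x`, whose subgroup is therefore a
conjugate of `H` contained in the conjugate `G_x`; for an almost normal `H` this forces equality,
so `G_x` fixes a whole neighbourhood of `x`.
-/

open Filter Topology MulAction Pointwise

theorem Monotone.map_eq_of_map_le_of_iterate_eq {α : Type*} [PartialOrder α] {f : α → α}
    (hf : Monotone f) {x : α} (hle : f x ≤ x) {n : ℕ} (hn : 0 < n) (hfix : f^[n] x = x) :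
    f x = x :=
  le_antisymm hle <| by
    simpa only [hfix, Function.iterate_one] using hf.antitone_iterate_of_map_le hle hn

section ConjSubgroup

variable {G : Type*} [Group G] {H : Subgroup G}

theorem conjSubgroup_eq_smul (g : G) (H : Subgroup G) : conjSubgroup g H = MulAut.conj g • H :=
  rfl

theorem conjSubgroup_mul (a b : G) (H : Subgroup G) :
    conjSubgroup (a * b) H = conjSubgroup a (conjSubgroup b H) := by
  simp only [conjSubgroup_eq_smul, map_mul, mul_smul]

theorem conjSubgroup_le_conjSubgroup_iff (g : G) {K L : Subgroup G} :
    conjSubgroup g K ≤ conjSubgroup g L ↔ K ≤ L :=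
  Subgroup.pointwise_smul_le_pointwise_smul_iff (a := MulAut.conj g)

theorem conjSubgroup_iterate (g : G) (n : ℕ) : (conjSubgroup g)^[n] = conjSubgroup (g ^ n) := by
  change (MulAut.conj g • · : Subgroup G → Subgroup G)^[n] = (MulAut.conj (g ^ n) • ·)
  rw [smul_iterate, map_pow]

theorem conjSubgroup_eq_self_of_mem_normalizer {g : G} (hg : g ∈ Subgroup.normalizer (H : Set G)) :
    conjSubgroup g H = H :=
  Subgroup.mem_normalizer_iff_map_conj_eq.mp hg

theorem finite_range_conjSubgroup (hAN : (Subgroup.normalizer (H : Set G)).FiniteIndex) :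
    (Set.range (conjSubgroup · H)).Finite := by
  refine (Set.finite_range fun q : G ⧸ Subgroup.normalizer (H : Set G) ↦
    conjSubgroup q.out H).subset ?_
  rintro _ ⟨g, rfl⟩
  obtain ⟨n, hn⟩ := QuotientGroup.mk_out_eq_mul (Subgroup.normalizer (H : Set G)) g
  exact ⟨g, by dsimp only; rw [hn, conjSubgroup_mul, conjSubgroup_eq_self_of_mem_normalizer n.2]⟩

theorem conjSubgroup_eq_self_of_le (hAN : (Subgroup.normalizer (H : Set G)).FiniteIndex) {g : G}
    (hle : conjSubgroup g H ≤ H) : conjSubgroup g H = H := by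
  obtain ⟨n, hn, -, hgn⟩ := Subgroup.exists_pow_mem_of_index_ne_zero hAN.index_ne_zero g
  refine Monotone.map_eq_of_map_le_of_iterate_eq
    (fun _ _ ↦ (conjSubgroup_le_conjSubgroup_iff g).mpr) hle hn ?_
  rw [conjSubgroup_iterate]
  exact conjSubgroup_eq_self_of_mem_normalizer hgn

theorem conjSubgroup_eq_of_le (hAN : (Subgroup.normalizer (H : Set G)).FiniteIndex) {g g' : G}
    (hle : conjSubgroup g H ≤ conjSubgroup g' H) : conjSubgroup g H = conjSubgroup g' H := by
  have hself : conjSubgroup (g'⁻¹ * g) H = H := by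
    refine conjSubgroup_eq_self_of_le hAN ((conjSubgroup_le_conjSubgroup_iff g').mp ?_)
    rwa [← conjSubgroup_mul, mul_inv_cancel_left]
  rw [← mul_inv_cancel_left g' g, conjSubgroup_mul, hself]

end ConjSubgroup

theorem IsClosed.eventually_imp_mem {X : Type*} [TopologicalSpace X] {C : Set X} (hC : IsClosed C)
    (x : X) : ∀ᶠ y in 𝓝 x, y ∈ C → x ∈ C := by
  by_cases hx : x ∈ C
  · exact .of_forall fun _ _ ↦ hx
  · exact (hC.isOpen_compl.eventually_mem hx).mono fun _ hy hyC ↦ absurd hyC hy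

section Strata

variable {G X : Type*} [Group G] [MulAction G X]

variable (G) in
def isotropyStratum (K : Subgroup G) : Set X :=
  {x | stabilizer G x = K}

theorem setXH_eq_iUnion (H : Subgroup G) :
    setXH G H = ⋃ g : G, (isotropyStratum G (conjSubgroup g H) : Set X) := by
  ext x
  simp only [setXH, isotropyStratum, Set.mem_iUnion]
  rfl

variable [TopologicalSpace X]

theorem le_stabilizer_of_mem_closure_isotropyStratum [T2Space X] [ContinuousConstSMul G X]
    {K : Subgroup G} {x : X} (hx : x ∈ closure (isotropyStratum G K)) : K ≤ stabilizer G x :=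
  fun k hk ↦ closure_minimal (fun y (hy : stabilizer G y = K) ↦ (hy ▸ hk : k ∈ stabilizer G y))
    (isClosed_fixedPoints (continuous_const_smul k)) hx

theorem trivialHolonomy_iff_eventually {x : X} :
    TrivialHolonomy G x ↔ ∀ g ∈ stabilizer G x, ∀ᶠ y in 𝓝 x, g • y = y := by
  simp only [TrivialHolonomy, eventually_nhds_iff]
  exact forall₂_congr fun _ _ ↦ ⟨fun ⟨U, hU, hxU, hfix⟩ ↦ ⟨U, hfix, hU, hxU⟩,
    fun ⟨U, hfix, hU, hxU⟩ ↦ ⟨U, hU, hxU, hfix⟩⟩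

theorem stabilizer_le_of_trivialHolonomy {K : Subgroup G} {x : X} (hx : TrivialHolonomy G x)
    (hK : x ∈ closure (isotropyStratum G K)) : stabilizer G x ≤ K := by
  intro s hs
  obtain ⟨y, hsy, hyK⟩ :=
    ((trivialHolonomy_iff_eventually.mp hx s hs).and_frequently
      (mem_closure_iff_frequently.mp hK)).exists
  exact (hyK : stabilizer G y = K) ▸ hsy

theorem exists_mem_closure_isotropyStratum {H : Subgroup G}
    (hAN : (Subgroup.normalizer (H : Set G)).FiniteIndex) (hdense : Dense (setXH G H : Set X))
    (x : X) : ∃ g : G, x ∈ closure (isotropyStratum G (conjSubgroup g H)) := by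
  have hx := hdense x
  rw [setXH_eq_iUnion, ← Set.biUnion_range (f := (conjSubgroup · H)) (g := isotropyStratum G),
    (finite_range_conjSubgroup hAN).closure_biUnion] at hx
  simpa only [Set.mem_iUnion, Set.mem_range, exists_prop, exists_exists_eq_and] using hx

theorem mem_setXH_of_trivialHolonomy [T2Space X] [ContinuousConstSMul G X] {H : Subgroup G}
    (hAN : (Subgroup.normalizer (H : Set G)).FiniteIndex) (hdense : Dense (setXH G H : Set X))
    {x : X} (hx : TrivialHolonomy G x) : x ∈ setXH G H := by
  obtain ⟨g, hg⟩ := exists_mem_closure_isotropyStratum hAN hdense x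
  exact ⟨g, le_antisymm (stabilizer_le_of_trivialHolonomy hx hg)
    (le_stabilizer_of_mem_closure_isotropyStratum hg)⟩

theorem trivialHolonomy_of_mem_setXH [T2Space X] [ContinuousConstSMul G X] {H : Subgroup G}
    (hAN : (Subgroup.normalizer (H : Set G)).FiniteIndex) (hdense : Dense (setXH G H : Set X))
    {x : X} (hx : x ∈ setXH G H) : TrivialHolonomy G x := by
  obtain ⟨g, hg⟩ := hx
  have hnear : ∀ᶠ y in 𝓝 x, ∀ K ∈ Set.range (conjSubgroup · H),
      y ∈ closure (isotropyStratum G K) → x ∈ closure (isotropyStratum G K) :=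
    (finite_range_conjSubgroup hAN).eventually_all.mpr fun K _ ↦
      isClosed_closure.eventually_imp_mem x
  refine trivialHolonomy_iff_eventually.mpr fun s hs ↦ hnear.mono fun y hy ↦ ?_
  obtain ⟨g', hg'⟩ := exists_mem_closure_isotropyStratum hAN hdense y
  have hle := le_stabilizer_of_mem_closure_isotropyStratum (hy _ ⟨g', rfl⟩ hg')
  rw [hg] at hle hs
  exact le_stabilizer_of_mem_closure_isotropyStratum hg' (conjSubgroup_eq_of_le hAN hle ▸ hs)

end Strata

theorem stmt3_general {G X : Type*} [Group G]
    [TopologicalSpace X] [T2Space X]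
    [MulAction G X] [ContinuousConstSMul G X]
    (H : Subgroup G) (hAN : (Subgroup.normalizer (H : Set G)).FiniteIndex)
    (hdense : Dense (setXH G H : Set X)) :
    setXH G H = {x : X | TrivialHolonomy G x} :=
  Set.Subset.antisymm (fun _ hx ↦ trivialHolonomy_of_mem_setXH hAN hdense hx)
    fun _ hx ↦ mem_setXH_of_trivialHolonomy hAN hdense hx

/-- Let `(X,G)` be a dynamical system and `H` an almost normal subgroup of `G`. If `X_H` is dense
in `X`, then `X_H` is exactly the set of points of `X` with trivial holonomy. -/
theorem stmt3 {G X : Type*} [Group G] [Countable G]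
    [TopologicalSpace X] [CompactSpace X] [T2Space X]
    [MulAction G X] [ContinuousConstSMul G X]
    (H : Subgroup G) (hAN : (Subgroup.normalizer (H : Set G)).FiniteIndex)
    (hdense : Dense (setXH G H : Set X)) :
    setXH G H = {x : X | TrivialHolonomy G x} :=
  stmt3_general H hAN hdense
end

section
/- Let (X,G) be a minimal dynamical system equipped with an ergodic invariant Borel probability measure μ. Then the stabilizer G_x is finite for μ-almost every x ∈ X if and only if there exists a finite almost normal subgroup H of G such that μ(X_H) = 1, where X_H = {x ∈ X : G_x = gHg⁻¹ for some g ∈ G}. -/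
/-!
Almost every stabilizer is finite and a countable group has only countably many finite subgroups,
so some finite `H` is the exact stabilizer of every point of a set `A_H` of positive measure.
The translate `g • A_H` is `A_{gHg⁻¹}`; these sets are disjoint for distinct conjugates and all
have measure `μ A_H`, so `H` has finitely many conjugates, i.e. its normalizer has finite index.
The set `X_H` is invariant, Borel (fixed-point sets are closed) and contains `A_H`, so ergodicity
gives `μ X_H = 1`. Conversely, points of `X_H` have stabilizers conjugate to the finite group `H`.
-/

open MeasureTheory Pointwise

open MulAction ConjAct

section ConjugateSubgroups

variable {G : Type*} [Group G]

theorem conjSubgroup_eq_toConjAct_smul (g : G) (H : Subgroup G) :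
    conjSubgroup g H = toConjAct g • H := by
  ext k
  rw [conjSubgroup, Subgroup.mem_map_equiv, MulAut.conj_symm_apply,
    Subgroup.mem_pointwise_smul_iff_inv_smul_mem, ← toConjAct_inv, toConjAct_smul, inv_inv]

theorem Subgroup.normalizer_eq_comap_stabilizer_conjAct (H : Subgroup G) :
    Subgroup.normalizer (H : Set G) =
      (stabilizer (ConjAct G) H).comap (toConjAct : G ≃* ConjAct G).toMonoidHom := by
  ext g
  rw [Subgroup.mem_comap, mem_stabilizer_iff]
  exact Subgroup.conjAct_pointwise_smul_iff.symm

theorem Subgroup.finiteIndex_normalizer_of_finite_orbit {H : Subgroup G}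
    (h : (orbit (ConjAct G) H).Finite) : (Subgroup.normalizer (H : Set G)).FiniteIndex := by
  rw [Subgroup.finiteIndex_iff, normalizer_eq_comap_stabilizer_conjAct,
    Subgroup.index_comap_of_surjective _ toConjAct.surjective, index_stabilizer]
  exact Set.ncard_ne_zero_of_mem (mem_orbit_self H) h

theorem Subgroup.countable_setOf_finite [Countable G] :
    {H : Subgroup G | (H : Set G).Finite}.Countable :=
  Set.Countable.ofPred_finite.preimage SetLike.coe_injective

end ConjugateSubgroups

section StabilizerLevelSets

variable {G X : Type*} [Group G] [MulAction G X]

theorem stabilizer_smul_eq_toConjAct_smul (g : G) (x : X) :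
    stabilizer G (g • x) = toConjAct g • stabilizer G x := by
  rw [stabilizer_smul_eq_stabilizer_map_conj]
  exact conjSubgroup_eq_toConjAct_smul g _

theorem smul_stabilizer_preimage (g : G) (S : Set (Subgroup G)) :
    g • (stabilizer G ⁻¹' S : Set X) = stabilizer G ⁻¹' (toConjAct g • S) := by
  ext x
  rw [Set.mem_smul_set_iff_inv_smul_mem, Set.mem_preimage, Set.mem_preimage,
    Set.mem_smul_set_iff_inv_smul_mem, stabilizer_smul_eq_toConjAct_smul, toConjAct_inv]

theorem setXH_eq_stabilizer_preimage_orbit (H : Subgroup G) :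
    (setXH G H : Set X) = stabilizer G ⁻¹' orbit (ConjAct G) H := by
  ext x
  simp only [setXH, conjSubgroup_eq_toConjAct_smul, Set.mem_ofPred_eq, Set.mem_preimage]
  exact ⟨fun ⟨g, hg⟩ => ⟨toConjAct g, hg.symm⟩,
    fun ⟨c, hc⟩ => ⟨ofConjAct c, by rw [toConjAct_ofConjAct]; exact hc.symm⟩⟩

theorem smul_setXH (g : G) (H : Subgroup G) : g • (setXH G H : Set X) = setXH G H := by
  rw [setXH_eq_stabilizer_preimage_orbit, smul_stabilizer_preimage, smul_orbit]

theorem finite_stabilizer_of_mem_setXH {H : Subgroup G} (hH : (H : Set G).Finite) {x : X}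
    (hx : x ∈ setXH G H) : (stabilizer G x : Set G).Finite := by
  obtain ⟨g, hg⟩ := hx
  rw [hg, conjSubgroup, Subgroup.coe_map]
  exact hH.image _

variable [Countable G] [TopologicalSpace X] [T2Space X] [ContinuousConstSMul G X]
  [MeasurableSpace X] [OpensMeasurableSpace X]

theorem measurableSet_stabilizer_preimage_singleton (K : Subgroup G) :
    MeasurableSet (stabilizer G ⁻¹' {K} : Set X) := by
  have hfix (g : G) : MeasurableSet {x : X | g • x = x} :=
    (isClosed_eq (continuous_const_smul g) continuous_id).measurableSet
  have : (stabilizer G ⁻¹' {K} : Set X) = ⋂ g : G, {x | g • x = x ↔ g ∈ K} := by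
    ext x
    simp only [Set.mem_preimage, Set.mem_singleton_iff, Set.mem_iInter, Set.mem_ofPred_eq,
      SetLike.ext_iff, mem_stabilizer_iff]
  rw [this]
  refine .iInter fun g => ?_
  by_cases hg : g ∈ K
  · simp only [hg, iff_true]
    exact hfix g
  · simp only [hg, iff_false]
    exact (hfix g).compl

theorem measurableSet_stabilizer_preimage {S : Set (Subgroup G)} (hS : S.Countable) :
    MeasurableSet (stabilizer G ⁻¹' S : Set X) := by
  rw [← Set.biUnion_preimage_singleton]
  exact .biUnion hS fun K _ => measurableSet_stabilizer_preimage_singleton K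

theorem measurableSet_setXH (H : Subgroup G) : MeasurableSet (setXH G H : Set X) := by
  rw [setXH_eq_stabilizer_preimage_orbit]
  have : Countable (ConjAct G) := toConjAct.surjective.countable
  exact measurableSet_stabilizer_preimage (Set.countable_range _)

end StabilizerLevelSets

section InvariantMeasures

variable {G X : Type*} [Group G] [Countable G] [MulAction G X] [MeasurableSpace X] {μ : Measure X}

theorem exists_finite_measure_stabilizer_preimage_ne_zero [NeZero μ]
    (hae : ∀ᵐ x ∂μ, (stabilizer G x : Set G).Finite) :
    ∃ H : Subgroup G, (H : Set G).Finite ∧ μ (stabilizer G ⁻¹' {H}) ≠ 0 := by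
  by_contra! h
  have hnull : μ (stabilizer G ⁻¹' {H : Subgroup G | (H : Set G).Finite}) = 0 := by
    rw [← Set.biUnion_preimage_singleton]
    exact (measure_biUnion_null_iff Subgroup.countable_setOf_finite).2 h
  obtain ⟨x, hfin, hx⟩ := (hae.and (measure_eq_zero_iff_ae_notMem.1 hnull)).exists
  exact hx hfin

theorem finite_orbit_conjAct_of_measure_ne_zero [TopologicalSpace X] [T2Space X]
    [ContinuousConstSMul G X] [OpensMeasurableSpace X] [IsFiniteMeasure μ]
    (hinv : ∀ (g : G) (A : Set X), μ (g • A) = μ A) {H : Subgroup G}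
    (hH : μ (stabilizer G ⁻¹' {H}) ≠ 0) : (orbit (ConjAct G) H).Finite := by
  refine (Measure.finite_const_le_meas_of_disjoint_iUnion μ (pos_iff_ne_zero.2 hH)
    (As := fun K : Subgroup G => stabilizer G ⁻¹' {K})
    measurableSet_stabilizer_preimage_singleton
    (fun K L hKL => Disjoint.preimage _ (Set.disjoint_singleton.2 hKL))
    (measure_ne_top μ _)).subset ?_
  rintro _ ⟨c, rfl⟩
  rw [Set.mem_ofPred_eq, ← toConjAct_ofConjAct c, ← Set.smul_set_singleton,
    ← smul_stabilizer_preimage, hinv]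

end InvariantMeasures

theorem stmt8_general {G X : Type*} [Group G] [Countable G]
    [TopologicalSpace X] [T2Space X]
    [MeasurableSpace X] [BorelSpace X]
    [MulAction G X] [ContinuousConstSMul G X]
    (μ : Measure X) [IsProbabilityMeasure μ]
    (hinv : ∀ (g : G) (A : Set X), μ (g • A) = μ A)
    (herg : ∀ A : Set X, MeasurableSet A → (∀ g : G, g • A = A) → μ A = 0 ∨ μ A = 1) :
    (∀ᵐ x ∂μ, (MulAction.stabilizer G x : Set G).Finite) ↔
      ∃ H : Subgroup G, (H : Set G).Finite ∧ (Subgroup.normalizer (H : Set G)).FiniteIndex ∧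
        μ (setXH G H : Set X) = 1 := by
  constructor
  · intro hae
    obtain ⟨H, hH, hμH⟩ := exists_finite_measure_stabilizer_preimage_ne_zero hae
    refine ⟨H, hH, Subgroup.finiteIndex_normalizer_of_finite_orbit
      (finite_orbit_conjAct_of_measure_ne_zero hinv hμH), ?_⟩
    have hsub : stabilizer G ⁻¹' {H} ⊆ (setXH G H : Set X) := by
      rw [setXH_eq_stabilizer_preimage_orbit]
      exact Set.preimage_mono (Set.singleton_subset_iff.2 (mem_orbit_self H))
    exact (herg _ (measurableSet_setXH H) (smul_setXH · H)).resolve_left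
      fun h => hμH (measure_mono_null hsub h)
  · rintro ⟨H, hH, -, hμ⟩
    filter_upwards [(mem_ae_iff_prob_eq_one (measurableSet_setXH H)).2 hμ] with x hx
    exact finite_stabilizer_of_mem_setXH hH hx

/-- Let `(X,G)` be a minimal dynamical system with an ergodic invariant Borel probability measure
`μ`. Then μ-almost every stabilizer is finite if and only if there exists a finite almost normal
subgroup `H` of `G` with `μ(X_H) = 1`. -/
theorem stmt8 {G X : Type*} [Group G] [Countable G]
    [TopologicalSpace X] [CompactSpace X] [T2Space X]
    [MeasurableSpace X] [BorelSpace X]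
    [MulAction G X] [ContinuousConstSMul G X]
    (hmin : ∀ x : X, Dense (MulAction.orbit G x))
    (μ : Measure X) [IsProbabilityMeasure μ]
    (hinv : ∀ (g : G) (A : Set X), μ (g • A) = μ A)
    (herg : ∀ A : Set X, MeasurableSet A → (∀ g : G, g • A = A) → μ A = 0 ∨ μ A = 1) :
    (∀ᵐ x ∂μ, (MulAction.stabilizer G x : Set G).Finite) ↔
      ∃ H : Subgroup G, (H : Set G).Finite ∧ (Subgroup.normalizer (H : Set G)).FiniteIndex ∧
        μ (setXH G H : Set X) = 1 :=
  stmt8_general μ hinv herg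
end
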